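/- Fix a bipartition of n qubits into q qubits and n-q qubits. Write a state ψ ∈ (C^2)^{⊗n} as ψ = Σ_{j,k} a_{jk} u_j ⊗ v_k with orthonormal bases {u_j} of the first factor and {v_k} of the second, and let A = (a_{jk}), U = ((u_j, u_{j'})_q), V = ((v_k, v_{k'})_{n-q}) using the SL-invariant bilinear forms. Then for any ℓ ∈ N, the function f(ψ) = Tr[(U A V A^T)^ℓ] is a homogeneous polynomial of degree 2ℓ in the coefficients of ψ that is invariant under the action of SL(2,C)^{⊗n}. -/
import Mathlib


open Matrix

/- STATEMENT 5: For a bipartite cut of n qubits into q and p = n - q qubits,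
with coefficient matrix A of ψ in the (orthonormal standard) product basis,
U = Gram matrix of the SL-invariant bilinear form on the first factor
(= J^{⊗q}), V = J^{⊗p} on the second factor, the function
f(ψ) = Tr[(U A V Aᵀ)^ℓ] is homogeneous of degree 2ℓ in the coefficients of ψ
and invariant under SL(2,C)^{⊗n} = SL(2,C)^{⊗q} ⊗ SL(2,C)^{⊗p}. -/

noncomputable def Jmat : Matrix (Fin 2) (Fin 2) ℂ := !![0, 1; -1, 0]

/-- Kronecker product of the 2×2 matrices `g i`. -/
noncomputable def kron {m : ℕ} (g : Fin m → Matrix (Fin 2) (Fin 2) ℂ) :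
    Matrix (Fin m → Fin 2) (Fin m → Fin 2) ℂ :=
  Matrix.of fun b b' => ∏ i, g i (b i) (b' i)

/-- `f_ℓ^{A_q|B_p}` evaluated on the coefficient matrix `A` of the state. -/
noncomputable def slipTrace (q p ℓ : ℕ)
    (A : Matrix (Fin q → Fin 2) (Fin p → Fin 2) ℂ) : ℂ :=
  ((kron (fun _ : Fin q => Jmat) * A * kron (fun _ : Fin p => Jmat) * Aᵀ) ^ ℓ).trace

lemma kron_mul {m : ℕ} (g h : Fin m → Matrix (Fin 2) (Fin 2) ℂ) :
    kron g * kron h = kron (fun i => g i * h i) := by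
  ext b b'
  simp only [kron, Matrix.mul_apply, Matrix.of_apply]
  rw [Finset.prod_univ_sum]
  simp [Fintype.piFinset_univ, Finset.prod_mul_distrib]

lemma kron_transpose {m : ℕ} (g : Fin m → Matrix (Fin 2) (Fin 2) ℂ) :
    (kron g)ᵀ = kron (fun i => (g i)ᵀ) := by
  ext b b'
  simp [kron]

lemma sl2_J (g : Matrix.SpecialLinearGroup (Fin 2) ℂ) :
    (g : Matrix (Fin 2) (Fin 2) ℂ)ᵀ * Jmat * g = Jmat := by
  have hdet : (g : Matrix (Fin 2) (Fin 2) ℂ) 0 0 * g 1 1 - g 0 1 * g 1 0 = 1 := by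
    have := g.property
    rwa [Matrix.det_fin_two] at this
  ext i j
  fin_cases i <;> fin_cases j <;>
    simp [Jmat, Matrix.mul_apply, Fin.sum_univ_two, Matrix.transpose_apply] <;>
    first
      | linear_combination hdet
      | linear_combination -hdet
      | ring

lemma trace_pow_mul_comm {α : Type*} [Fintype α] [DecidableEq α]
    (P Q : Matrix α α ℂ) (ℓ : ℕ) :
    ((P * Q) ^ ℓ).trace = ((Q * P) ^ ℓ).trace := by
  have key : ∀ k : ℕ, (P * Q) ^ (k + 1) = P * (Q * P) ^ k * Q := by
    intro k
    induction k with
    | zero => simp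
    | succ j ihj =>
        rw [pow_succ, ihj, pow_succ]
        noncomm_ring
  cases ℓ with
  | zero => rfl
  | succ k =>
      rw [key, Matrix.trace_mul_comm, ← mul_assoc, ← pow_succ']

theorem slipTrace_homogeneous_and_invariant (q p ℓ : ℕ)
    (A : Matrix (Fin q → Fin 2) (Fin p → Fin 2) ℂ) :
    (∀ c : ℂ, slipTrace q p ℓ (c • A) = c ^ (2 * ℓ) * slipTrace q p ℓ A) ∧
    (∀ (ga : Fin q → Matrix.SpecialLinearGroup (Fin 2) ℂ)
       (gb : Fin p → Matrix.SpecialLinearGroup (Fin 2) ℂ),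
      slipTrace q p ℓ
        (kron (fun i => (ga i : Matrix (Fin 2) (Fin 2) ℂ)) * A *
          (kron (fun i => (gb i : Matrix (Fin 2) (Fin 2) ℂ)))ᵀ)
        = slipTrace q p ℓ A) := by
  set U := kron (fun _ : Fin q => Jmat) with hU
  set V := kron (fun _ : Fin p => Jmat) with hV
  constructor
  · intro c
    have h1 : U * (c • A) * V * (c • A)ᵀ = (c ^ 2) • (U * A * V * Aᵀ) := by
      rw [Matrix.transpose_smul]
      simp only [Matrix.mul_smul, Matrix.smul_mul, smul_smul, sq]
    simp only [slipTrace, ← hU, ← hV, h1, smul_pow, Matrix.trace_smul, smul_eq_mul, ← pow_mul]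
  · intro ga gb
    set Ga := kron (fun i => (ga i : Matrix (Fin 2) (Fin 2) ℂ)) with hGa'
    set Gb := kron (fun i => (gb i : Matrix (Fin 2) (Fin 2) ℂ)) with hGb'
    have hGa : Gaᵀ * U * Ga = U := by
      rw [hGa', hU, kron_transpose, kron_mul, kron_mul]
      have : (fun i : Fin q => ((ga i : Matrix (Fin 2) (Fin 2) ℂ))ᵀ * Jmat * (ga i))
          = fun _ : Fin q => Jmat := funext fun i => sl2_J (ga i)
      rw [this]
    have hGb : Gbᵀ * V * Gb = V := by
      rw [hGb', hV, kron_transpose, kron_mul, kron_mul]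
      have : (fun i : Fin p => ((gb i : Matrix (Fin 2) (Fin 2) ℂ))ᵀ * Jmat * (gb i))
          = fun _ : Fin p => Jmat := funext fun i => sl2_J (gb i)
      rw [this]
    have hA : U * (Ga * A * Gbᵀ) * V * (Ga * A * Gbᵀ)ᵀ
        = (U * Ga) * (A * V * Aᵀ * Gaᵀ) := by
      rw [Matrix.transpose_mul, Matrix.transpose_mul, Matrix.transpose_transpose]
      calc U * (Ga * A * Gbᵀ) * V * (Gb * (Aᵀ * Gaᵀ))
          = U * Ga * (A * (Gbᵀ * V * Gb) * (Aᵀ * Gaᵀ)) := by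
            simp only [Matrix.mul_assoc]
        _ = (U * Ga) * (A * V * Aᵀ * Gaᵀ) := by rw [hGb]; simp only [Matrix.mul_assoc]
    rw [slipTrace, ← hU, ← hV, hA, trace_pow_mul_comm]
    have h2 : A * V * Aᵀ * Gaᵀ * (U * Ga) = (A * V * Aᵀ) * U := by
      calc A * V * Aᵀ * Gaᵀ * (U * Ga) = A * V * Aᵀ * (Gaᵀ * U * Ga) := by
            simp only [Matrix.mul_assoc]
        _ = (A * V * Aᵀ) * U := by rw [hGa]
    rw [h2, trace_pow_mul_comm, slipTrace, ← hU, ← hV]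
    simp only [Matrix.mul_assoc]
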